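/- arXiv:1007.1351 — 2 statements merged into one kernel-verified Lean document; each statement's English description precedes it below -/
import Mathlib

section
/- Let (X,d,μ) be a space of homogeneous type, fix x₀ ∈ X, and let β be a μ-measurable function on X with β₊ := sup_X β < −1. Then there exist r₀ > 0 and a constant c > 0, independent of r and x, such that for all 0 < r ≤ r₀ and all x ∈ X: ∫_{X∖B(x₀,r)} (μ(B_{x₀y}))^{β(x)} dμ(y) ≤ c·((β(x)+1)/β(x))·(μ(B(x₀,r)))^{β(x)+1}. -/
open MeasureTheory Set ENNReal

noncomputable section

namespace TwoWeight

/-- A quasimetric measure space `(X, d, μ)`. -/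
structure QMS (X : Type*) [MeasurableSpace X] where
  d : X → X → ℝ
  μ : Measure X
  a₀ : ℝ
  a₁ : ℝ
  a₀_pos : 0 < a₀
  a₁_pos : 0 < a₁
  d_nonneg : ∀ x y, 0 ≤ d x y
  d_eq_zero_iff : ∀ x y, d x y = 0 ↔ x = y
  d_triangle : ∀ x y z, d x y ≤ a₁ * (d x z + d z y)
  d_symm : ∀ x y, d x y ≤ a₀ * d y x
  ball_measurable : ∀ x r, MeasurableSet {y | d x y < r}
  ball_lt_top : ∀ x r, μ {y | d x y < r} < ⊤
  singleton_null : ∀ x, μ {x} = 0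
  annulus_nonempty : ∀ x (r R : ℝ), 0 < r → r < R →
    ENNReal.ofReal R < ⨆ (u : X) (v : X), ENNReal.ofReal (d u v) →
    ({y | d x y < R} \ {y | d x y < r}).Nonempty

/-- `p₋(E)`, the infimum of `p` over a set. -/
def infOn {X : Type*} (p : X → ℝ) (E : Set X) : ℝ := sInf (p '' E)

/-- `p₊(E)`, the supremum of `p` over a set. -/
def supOn {X : Type*} (p : X → ℝ) (E : Set X) : ℝ := sSup (p '' E)

/-- The conjugate exponent `t' = t/(t-1)`. -/
def conj (t : ℝ) : ℝ := t / (t - 1)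

namespace QMS

variable {X : Type*} [MeasurableSpace X] (S : QMS X)

/-- The ball `B(x,r)`. -/
def ball (x : X) (r : ℝ) : Set X := {y | S.d x y < r}

/-- The closed ball `B̄(x,r)`. -/
def cball (x : X) (r : ℝ) : Set X := {y | S.d x y ≤ r}

/-- The diameter `L` of the space, as an extended real. -/
def L : ℝ≥0∞ := ⨆ (u : X) (v : X), ENNReal.ofReal (S.d u v)

/-- The doubling condition for `μ`: SHT = QMS + doubling. -/
def doubling : Prop :=
  ∃ c : ℝ, 0 < c ∧ ∀ x r, S.μ (S.ball x (2 * r)) ≤ ENNReal.ofReal c * S.μ (S.ball x r)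

/-- The reverse doubling condition with constants `A, B`. -/
def revDoubling (A B : ℝ) : Prop :=
  ∀ x r, 0 < r → ENNReal.ofReal B * S.μ (S.ball x r) ≤ S.μ (S.ball x (A * r))

/-- μ is upper Ahlfors 1-regular. -/
def upperAhlfors1 : Prop :=
  ∃ c : ℝ, 0 < c ∧ ∀ x r, 0 < r → S.μ (S.ball x r) ≤ ENNReal.ofReal (c * r)

/-- `μ(B_{xy})` as a real number. -/
def mB (x y : X) : ℝ := (S.μ (S.ball x (S.d x y))).toReal

/-- log-Hölder type condition on `X` (with respect to measures of balls). -/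
def LH (p : X → ℝ) : Prop :=
  ∃ b c : ℝ, 0 < b ∧ 0 < c ∧ ∀ x y, S.d x y ≤ b →
    |p x - p y| ≤ c / (-Real.log (S.mB x y))

/-- log-Hölder type condition at a point `x`. -/
def LHAt (p : X → ℝ) (x : X) : Prop :=
  ∃ b c : ℝ, 0 < b ∧ 0 < c ∧ ∀ y, S.d x y ≤ b →
    |p x - p y| ≤ c / (-Real.log (S.mB x y))

/-- log-Hölder condition on `X` with respect to the quasimetric. -/
def LHbar (p : X → ℝ) : Prop :=
  ∃ b c : ℝ, 0 < b ∧ 0 < c ∧ ∀ x y, S.d x y ≤ b →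
    |p x - p y| ≤ c / (-Real.log (S.d x y))

/-- log-Hölder condition at a point with respect to the quasimetric. -/
def LHbarAt (p : X → ℝ) (x : X) : Prop :=
  ∃ b c : ℝ, 0 < b ∧ 0 < c ∧ ∀ y, S.d x y ≤ b →
    |p x - p y| ≤ c / (-Real.log (S.d x y))

/-- The class `𝒫(N)`. -/
def PClass (p : X → ℝ) (N : ℝ) : Prop :=
  ∃ b c : ℝ, 0 < b ∧ 0 < c ∧ ∀ x r, 0 < r → r ≤ b →
    (S.μ (S.ball x (N * r))).toReal ^ (infOn p (S.ball x r) - supOn p (S.ball x r)) ≤ c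

/-- The class `𝒫(N, x)`. -/
def PClassAt (p : X → ℝ) (N : ℝ) (x : X) : Prop :=
  ∃ b c : ℝ, 0 < b ∧ 0 < c ∧ ∀ r, 0 < r → r ≤ b →
    (S.μ (S.ball x (N * r))).toReal ^ (infOn p (S.ball x r) - supOn p (S.ball x r)) ≤ c

/-- The modular `S_p(f) = ∫ |f|^{p(x)} dμ`. -/
def modular (p : X → ℝ) (f : X → ℝ) : ℝ≥0∞ :=
  ∫⁻ x, ENNReal.ofReal (|f x| ^ p x) ∂S.μ

/-- Membership in the variable exponent Lebesgue space `L^{p(·)}(X)`. -/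
def MemVL (p : X → ℝ) (f : X → ℝ) : Prop := S.modular p f < ⊤

/-- The norm of the variable exponent Lebesgue space `L^{p(·)}(X)`. -/
def VNorm (p : X → ℝ) (f : X → ℝ) : ℝ :=
  sInf {l : ℝ | 0 < l ∧ S.modular p (fun x => f x / l) ≤ 1}

/-- Boundedness of an operator from `L^{p(·)}(X)` to `L^{q(·)}(X)`. -/
def BoundedVL (p q : X → ℝ) (T : (X → ℝ) → X → ℝ) : Prop :=
  ∃ c : ℝ, 0 < c ∧ ∀ f, S.MemVL p f → S.VNorm q (T f) ≤ c * S.VNorm p f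

/-- The Hardy type transform `T_{v,w}`. -/
def Tvw (x₀ : X) (v w : X → ℝ) (f : X → ℝ) : X → ℝ :=
  fun x => v x * ∫ y in S.ball x₀ (S.d x₀ x), f y * w y ∂S.μ

/-- The dual Hardy type transform `T'_{v,w}`. -/
def Tvw' (x₀ : X) (v w : X → ℝ) (f : X → ℝ) : X → ℝ :=
  fun x => v x * ∫ y in (S.cball x₀ (S.d x₀ x))ᶜ, f y * w y ∂S.μ

/-- The potential operator `T_α` with constant exponent. -/
def Tpot (α : ℝ) (f : X → ℝ) : X → ℝ :=
  fun x => ∫ y, f y * (S.μ (S.ball x (S.d x y))).toReal ^ (α - 1) ∂S.μ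

/-- The potential operator `T_{α(·)}` with variable exponent. -/
def TpotVar (α : X → ℝ) (f : X → ℝ) : X → ℝ :=
  fun x => ∫ y, f y * (S.μ (S.ball x (S.d x y))).toReal ^ (α x - 1) ∂S.μ

/-- The potential operator `I_α` with constant exponent. -/
def Ipot (α : ℝ) (f : X → ℝ) : X → ℝ :=
  fun x => ∫ y, f y * S.d x y ^ (α - 1) ∂S.μ

/-- The potential operator `I_{α(·)}` with variable exponent. -/
def IpotVar (α : X → ℝ) (f : X → ℝ) : X → ℝ :=
  fun x => ∫ y, f y * S.d x y ^ (α x - 1) ∂S.μ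

/-- The Hardy–Littlewood maximal operator. -/
def maximal (f : X → ℝ) : X → ℝ :=
  fun x => ⨆ (r : ℝ) (_ : 0 < r), (S.μ (S.ball x r)).toReal⁻¹ * ∫ y in S.ball x r, |f y| ∂S.μ

/-- The set `F_x` (with reverse doubling constant `A`). -/
def Fset (x₀ : X) (A : ℝ) (x : X) : Set X :=
  {y | S.d x₀ x / (A ^ 2 * S.a₁) ≤ S.d x₀ y ∧ S.d x₀ y ≤ A ^ 2 * S.a₁ * S.d x₀ x}

/-- `p₀(x) = p₋(B̄_{x₀x})`. -/
def p0 (p : X → ℝ) (x₀ x : X) : ℝ := infOn p (S.cball x₀ (S.d x₀ x))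

/-- `p̃₀(x)`. -/
def p0t (p : X → ℝ) (x₀ : X) (a pc : ℝ) (x : X) : ℝ :=
  if S.d x₀ x ≤ a then S.p0 p x₀ x else pc

/-- `p₁(x) = p₋(B̄(x₀,a) \ B_{x₀x})`. -/
def p1 (p : X → ℝ) (x₀ : X) (a : ℝ) (x : X) : ℝ :=
  infOn p (S.cball x₀ a \ S.ball x₀ (S.d x₀ x))

/-- `p̃₁(x)`. -/
def p1t (p : X → ℝ) (x₀ : X) (a pc : ℝ) (x : X) : ℝ :=
  if S.d x₀ x ≤ a then S.p1 p x₀ a x else pc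

/-- The annuli `I_{2,k}`. -/
def I2k (x₀ : X) (A : ℝ) (k : ℤ) : Set X :=
  if S.L = ⊤ then S.cball x₀ (A ^ (k + 2) * S.a₁) \ S.ball x₀ (A ^ (k - 1) / S.a₁)
  else S.cball x₀ (A ^ (k + 2) * S.a₁ * S.L.toReal) \ S.ball x₀ (A ^ (k - 1) * S.L.toReal / S.a₁)

/-- A positive increasing function on `(0, 2L)`. -/
def PosIncOn (v : ℝ → ℝ) : Prop :=
  (∀ t : ℝ, 0 < t → ENNReal.ofReal t < 2 * S.L → 0 < v t) ∧
  ∀ s t : ℝ, 0 < s → s ≤ t → ENNReal.ofReal t < 2 * S.L → v s ≤ v t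

end QMS

end TwoWeight

/-!
Write `m(y) = μ(B(x₀, d(x₀, y)))`. The set `{m < t}` is radial, so it is covered (up to the null
point `x₀`) by the increasing balls `B(x₀, 2q)` with `μ(B(x₀, q)) < t`, and doubling gives
`μ{m < t} ≤ c t`. Cutting `X ∖ B(x₀, r)` into the layers `2ᵏ M ≤ m < 2ᵏ⁺¹ M`, `M = μ(B(x₀, r))`,
the `k`-th layer contributes at most `2c M^{β+1} (2^{β+1})ᵏ`, a geometric series since `β < -1`.
Its sum `2c M^{β+1} / (1 - 2^{β+1})` is bounded uniformly in `x` because `β(x) ≤ β₊ < -1`.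
-/

theorem two_pow_mul_rpow_mul {M β : ℝ} (hM : 0 < M) (k : ℕ) (C : ℝ) :
    ((2 : ℝ) ^ k * M) ^ β * (C * (2 ^ (k + 1) * M))
      = 2 * C * M ^ (β + 1) * ((2 : ℝ) ^ (β + 1)) ^ k := by
  rw [Real.mul_rpow (by positivity) hM.le, ← Real.rpow_natCast_mul zero_le_two,
    mul_comm (k : ℝ), Real.rpow_mul_natCast zero_le_two, Real.rpow_add_one two_ne_zero,
    Real.rpow_add_one hM.ne']
  ring

theorem setLIntegral_rpow_le_of_measure_lt_le {α : Type*} [MeasurableSpace α] {μ : Measure α}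
    {f : α → ℝ} {C : ℝ} (hC : 0 ≤ C) (hdist : ∀ t, μ {y | f y < t} ≤ ENNReal.ofReal (C * t))
    {M : ℝ} (hM : 0 < M) {β : ℝ} (hβ : β < -1) :
    ∫⁻ y in {y | M ≤ f y}, ENNReal.ofReal (f y ^ β) ∂μ
      ≤ ENNReal.ofReal (2 * C * M ^ (β + 1) / (1 - 2 ^ (β + 1))) := by
  set layer : ℕ → Set α := fun k => f ⁻¹' Ico (2 ^ k * M) (2 ^ (k + 1) * M)
  set q : ℝ := 2 ^ (β + 1)
  have hq0 : 0 ≤ q := by positivity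
  have hq1 : q < 1 := Real.rpow_lt_one_of_one_lt_of_neg one_lt_two (by linarith)
  have hcover : {y | M ≤ f y} ⊆ ⋃ k, layer k := fun y hy => by
    obtain ⟨k, hk⟩ := exists_nat_pow_near ((one_le_div hM).2 hy) one_lt_two
    exact mem_iUnion.2 ⟨k, (le_div_iff₀ hM).1 hk.1, (div_lt_iff₀ hM).1 hk.2⟩
  have hlayer : ∀ k, ∫⁻ y in layer k, ENNReal.ofReal (f y ^ β) ∂μ
      ≤ ENNReal.ofReal (2 * C * M ^ (β + 1) * q ^ k) := fun k => calc
    _ ≤ ∫⁻ _ in layer k, ENNReal.ofReal ((2 ^ k * M) ^ β) ∂μ :=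
        setLIntegral_mono measurable_const fun y hy => ENNReal.ofReal_le_ofReal <|
          Real.rpow_le_rpow_of_nonpos (by positivity) hy.1 (by linarith)
    _ = ENNReal.ofReal ((2 ^ k * M) ^ β) * μ (layer k) := setLIntegral_const _ _
    _ ≤ ENNReal.ofReal ((2 ^ k * M) ^ β) * ENNReal.ofReal (C * (2 ^ (k + 1) * M)) :=
        mul_le_mul_right ((measure_mono fun y hy => hy.2).trans (hdist _)) _
    _ = _ := by rw [← ENNReal.ofReal_mul (by positivity), two_pow_mul_rpow_mul hM]
  have hsum : HasSum (fun k => 2 * C * M ^ (β + 1) * q ^ k) (2 * C * M ^ (β + 1) / (1 - q)) := by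
    simpa [div_eq_mul_inv] using
      (hasSum_geometric_of_lt_one hq0 hq1).mul_left (2 * C * M ^ (β + 1))
  calc ∫⁻ y in {y | M ≤ f y}, ENNReal.ofReal (f y ^ β) ∂μ
      ≤ ∫⁻ y in ⋃ k, layer k, ENNReal.ofReal (f y ^ β) ∂μ := lintegral_mono_set hcover
    _ ≤ ∑' k, ∫⁻ y in layer k, ENNReal.ofReal (f y ^ β) ∂μ := lintegral_iUnion_le _ _
    _ ≤ ∑' k, ENNReal.ofReal (2 * C * M ^ (β + 1) * q ^ k) := ENNReal.tsum_le_tsum hlayer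
    _ = _ := by
        rw [← ENNReal.ofReal_tsum_of_nonneg (fun k => by positivity) hsum.summable, hsum.tsum_eq]

theorem inv_one_sub_two_rpow_le {β γ : ℝ} (hβγ : β ≤ γ) (hγ : γ < -1) :
    (1 - (2 : ℝ) ^ (β + 1))⁻¹ ≤ ((1 - 2 ^ (γ + 1)) * ((γ + 1) / γ))⁻¹ * ((β + 1) / β) := by
  have hq : (2 : ℝ) ^ (γ + 1) < 1 := Real.rpow_lt_one_of_one_lt_of_neg one_lt_two (by linarith)
  have hγ' : 0 < (γ + 1) / γ := div_pos_of_neg_of_neg (by linarith) (by linarith)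
  have hgeom : (1 - (2 : ℝ) ^ (β + 1))⁻¹ ≤ (1 - 2 ^ (γ + 1))⁻¹ :=
    inv_anti₀ (sub_pos.2 hq) (by gcongr; norm_num)
  have hratio : (γ + 1) / γ ≤ (β + 1) / β := by
    rw [add_div, add_div, div_self (by linarith), div_self (by linarith)]
    gcongr 1 + ?_
    exact one_div_le_one_div_of_neg_of_le (by linarith) hβγ
  calc (1 - (2 : ℝ) ^ (β + 1))⁻¹ ≤ (1 - 2 ^ (γ + 1))⁻¹ * ((γ + 1) / γ)⁻¹ * ((γ + 1) / γ) := by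
        rwa [inv_mul_cancel_right₀ hγ'.ne']
    _ ≤ _ := by
        rw [mul_inv]
        gcongr

namespace TwoWeight

-- `supOn` is `sSup`, which is `0` on sets unbounded above.
theorem le_supOn_of_supOn_neg {X : Type*} {p : X → ℝ} {E : Set X} (h : supOn p E < 0) {x : X}
    (hx : x ∈ E) : p x ≤ supOn p E := by
  have hbdd : BddAbove (p '' E) := by
    by_contra hnot
    rw [supOn, Real.sSup_of_not_bddAbove hnot] at h
    exact lt_irrefl 0 h
  exact le_csSup hbdd (mem_image_of_mem p hx)

namespace QMS

variable {X : Type*} [MeasurableSpace X] (S : QMS X)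

theorem ball_subset_ball (x : X) {r r' : ℝ} (h : r ≤ r') : S.ball x r ⊆ S.ball x r' :=
  fun _ hy => lt_of_lt_of_le hy h

theorem measure_ball_mono (x : X) : Monotone fun r => S.μ (S.ball x r) :=
  fun _ _ h => measure_mono (S.ball_subset_ball x h)

theorem compl_ball_subset_setOf_le_mB (x₀ : X) (r : ℝ) :
    (S.ball x₀ r)ᶜ ⊆ {y | (S.μ (S.ball x₀ r)).toReal ≤ S.mB x₀ y} := fun _ hy =>
  ENNReal.toReal_mono (S.ball_lt_top x₀ _).ne (S.measure_ball_mono x₀ (not_lt.1 hy))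

section Doubling

variable {S} {c : ℝ} (hdub : ∀ x r, S.μ (S.ball x (2 * r)) ≤ ENNReal.ofReal c * S.μ (S.ball x r))
include hdub

theorem measure_ball_eq_zero_of_measure_ball_eq_zero {x : X} {r : ℝ} (hr : 0 < r)
    (h : S.μ (S.ball x r) = 0) (ρ : ℝ) : S.μ (S.ball x ρ) = 0 := by
  have hpow : ∀ n : ℕ, S.μ (S.ball x (2 ^ n * r)) = 0 := by
    intro n
    induction n with
    | zero => simpa using h
    | succ n ih =>
      refine le_antisymm ?_ zero_le
      simpa [pow_succ, mul_comm _ (2 : ℝ), mul_assoc, ih] using hdub x (2 ^ n * r)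
  obtain ⟨n, hn⟩ := pow_unbounded_of_one_lt (ρ / r) one_lt_two
  exact measure_mono_null (S.ball_subset_ball x ((div_le_iff₀ hr).1 hn.le)) (hpow n)

theorem mB_eq_zero_of_measure_ball_eq_zero {x₀ : X} {r : ℝ} (hr : 0 < r)
    (h : S.μ (S.ball x₀ r) = 0) (y : X) : S.mB x₀ y = 0 := by
  rw [mB, measure_ball_eq_zero_of_measure_ball_eq_zero hdub hr h, ENNReal.toReal_zero]

theorem measure_setOf_mB_lt_le (hc : 0 ≤ c) (x₀ : X) (t : ℝ) :
    S.μ {y | S.mB x₀ y < t} ≤ ENNReal.ofReal (c * t) := by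
  set Q : Set ℚ := {q | 0 < q ∧ S.μ (S.ball x₀ q) < ENNReal.ofReal t}
  have hcover : {y | S.mB x₀ y < t} ⊆ {x₀} ∪ ⋃ q : Q, S.ball x₀ (2 * q) := by
    intro y hy
    rcases eq_or_ne y x₀ with rfl | hne
    · exact Or.inl rfl
    have hd : 0 < S.d x₀ y :=
      (S.d_nonneg x₀ y).lt_of_ne fun h => hne ((S.d_eq_zero_iff x₀ y).1 h.symm).symm
    obtain ⟨q, hq₁, hq₂⟩ := exists_rat_btwn (half_lt_self hd)
    have hyt : S.μ (S.ball x₀ (S.d x₀ y)) < ENNReal.ofReal t :=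
      (ENNReal.lt_ofReal_iff_toReal_lt (S.ball_lt_top x₀ _).ne).2 hy
    refine Or.inr (mem_iUnion.2 ⟨⟨q, ?_, ?_⟩, ?_⟩)
    · exact_mod_cast (half_pos hd).trans hq₁
    · exact (S.measure_ball_mono x₀ hq₂.le).trans_lt hyt
    · show S.d x₀ y < 2 * q
      linarith
  have hdir : Directed (· ⊆ ·) fun q : Q => S.ball x₀ (2 * q) :=
    Monotone.directed_le fun q q' h => S.ball_subset_ball x₀ (by gcongr)
  calc S.μ {y | S.mB x₀ y < t} ≤ S.μ ({x₀} ∪ ⋃ q : Q, S.ball x₀ (2 * q)) := measure_mono hcover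
    _ ≤ S.μ {x₀} + S.μ (⋃ q : Q, S.ball x₀ (2 * q)) := measure_union_le _ _
    _ = ⨆ q : Q, S.μ (S.ball x₀ (2 * q)) := by
        rw [S.singleton_null, zero_add, hdir.measure_iUnion]
    _ ≤ ENNReal.ofReal c * ENNReal.ofReal t :=
        iSup_le fun q => (hdub x₀ q).trans (mul_le_mul_right q.2.2.le _)
    _ = ENNReal.ofReal (c * t) := (ENNReal.ofReal_mul hc).symm

end Doubling

end QMS

end TwoWeight

open TwoWeight in
theorem statement3_general {X : Type*} [MeasurableSpace X]
    (S : QMS X) (hdub : S.doubling) (x₀ : X)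
    (β : X → ℝ)
    (hβ : supOn β Set.univ < -1) :
    ∃ r₀ c : ℝ, 0 < r₀ ∧ 0 < c ∧ ∀ r : ℝ, 0 < r → r ≤ r₀ → ∀ x : X,
      (∫⁻ y in (S.ball x₀ r)ᶜ,
          ENNReal.ofReal ((S.μ (S.ball x₀ (S.d x₀ y))).toReal ^ β x) ∂S.μ)
        ≤ ENNReal.ofReal
            (c * ((β x + 1) / β x) * (S.μ (S.ball x₀ r)).toReal ^ (β x + 1)) := by
  obtain ⟨c, hc, hdub⟩ := hdub
  set γ := supOn β Set.univ
  set K := ((1 - (2 : ℝ) ^ (γ + 1)) * ((γ + 1) / γ))⁻¹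
  have hK : 0 < K := inv_pos.2 <| mul_pos
    (sub_pos.2 (Real.rpow_lt_one_of_one_lt_of_neg one_lt_two (by linarith)))
    (div_pos_of_neg_of_neg (by linarith) (by linarith))
  refine ⟨1, 2 * c * K, one_pos, by positivity, fun r hr _ x => ?_⟩
  have hβx : β x ≤ γ := le_supOn_of_supOn_neg (by linarith) (mem_univ x)
  set M := (S.μ (S.ball x₀ r)).toReal
  rcases ENNReal.toReal_nonneg.eq_or_lt with hM | hM
  · have hnull : S.μ (S.ball x₀ r) = 0 :=
      ((ENNReal.toReal_eq_zero_iff _).1 hM.symm).resolve_right (S.ball_lt_top x₀ r).ne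
    -- `0 ^ β x = 0` for `Real.rpow`, so the integrand vanishes identically.
    have hzero : ∀ y, ENNReal.ofReal (S.mB x₀ y ^ β x) = 0 := fun y => by
      rw [S.mB_eq_zero_of_measure_ball_eq_zero hdub hr hnull, Real.zero_rpow (by linarith),
        ENNReal.ofReal_zero]
    exact ((lintegral_congr hzero).trans lintegral_zero).trans_le zero_le
  calc (∫⁻ y in (S.ball x₀ r)ᶜ, ENNReal.ofReal (S.mB x₀ y ^ β x) ∂S.μ)
      ≤ ∫⁻ y in {y | M ≤ S.mB x₀ y}, ENNReal.ofReal (S.mB x₀ y ^ β x) ∂S.μ :=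
        lintegral_mono_set (S.compl_ball_subset_setOf_le_mB x₀ r)
    _ ≤ ENNReal.ofReal (2 * c * M ^ (β x + 1) / (1 - 2 ^ (β x + 1))) :=
        setLIntegral_rpow_le_of_measure_lt_le hc.le (QMS.measure_setOf_mB_lt_le hdub hc.le x₀) hM
          (by linarith)
    _ ≤ _ := by
        refine ENNReal.ofReal_le_ofReal ?_
        rw [div_eq_mul_inv, show 2 * c * K * ((β x + 1) / β x) * M ^ (β x + 1)
          = 2 * c * M ^ (β x + 1) * (K * ((β x + 1) / β x)) by ring]
        gcongr
        exact inv_one_sub_two_rpow_le hβx hβ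

open TwoWeight in
/-- Lemma 1.7 (i). -/
theorem statement3 {X : Type*} [MeasurableSpace X] [Nonempty X]
    (S : QMS X) (hdub : S.doubling) (x₀ : X)
    (β : X → ℝ) (hβm : Measurable β)
    (hβ : supOn β Set.univ < -1) :
    ∃ r₀ c : ℝ, 0 < r₀ ∧ 0 < c ∧ ∀ r : ℝ, 0 < r → r ≤ r₀ → ∀ x : X,
      (∫⁻ y in (S.ball x₀ r)ᶜ,
          ENNReal.ofReal ((S.μ (S.ball x₀ (S.d x₀ y))).toReal ^ β x) ∂S.μ)
        ≤ ENNReal.ofReal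
            (c * ((β x + 1) / β x) * (S.μ (S.ball x₀ r)).toReal ^ (β x + 1)) :=
  statement3_general S hdub x₀ β hβ
end
end

section
/- Let (X,d,μ) be a space of homogeneous type whose measure satisfies the reverse doubling condition with constants A > 1 and B > 1. Let p, q be μ-measurable with 1 < p₋ ≤ p(x) ≤ q(x) ≤ q₊ < ∞ for all x ∈ X, and suppose there is a point x₀ ∈ X such that p, q ∈ LH(X,x₀). If L = ∞, assume p ≡ p_c and q ≡ q_c are constant outside some ball B(x₀,a). Then there exists a constant C > 0 such that for all f ∈ L^{p(·)}(X) and g ∈ L^{q'(·)}(X): Σ_{k∈ℤ} ‖f·χ_{I_{2,k}}‖_{L^{p(·)}(X)}·‖g·χ_{I_{2,k}}‖_{L^{q'(·)}(X)} ≤ C·‖f‖_{L^{p(·)}(X)}·‖g‖_{L^{q'(·)}(X)}. -/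
open MeasureTheory Set ENNReal

noncomputable section

namespace TwoWeight

/-!
Fix `Λ_f > ‖f‖`, `Λ_g > ‖g‖` and let `m_k`, `n_k` be the modulars of `f χ_k / Λ_f` and
`g χ_k / Λ_g` on the annuli `I_k = I_{2,k}`. Since every point lies in boundedly many annuli,
`∑ m_k, ∑ n_k ≤ N`. If `p ≤ P` and `q' ≤ R` on `I_k`, homogeneity of the modular gives
`‖f χ_k‖ ‖g χ_k‖ ≤ Λ_f Λ_g m_k^{1/P} n_k^{1/R}`, so it suffices to bound `m^{1/P} n^{1/R}` on
`[0,1]²` by `C (m + n) + w_k` with `∑ w_k < ∞`. Far from `x₀` the exponents are the constants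
`p_c ≤ q_c`, so `1/P + 1/R ≥ 1` and `m + n` suffices. On the finitely many intermediate annuli
the bound `1` suffices. Near `x₀` the log-Hölder condition gives `1/P + 1/R ≥ 1 - 2δ_k` with
`μ(B_k)^{-δ_k}` bounded, which yields `C (m + n) + μ(B_k)^{1/2}`, and reverse doubling makes
`μ(B_k)` decay geometrically as `k → -∞`. When `L < ∞`, reverse doubling forces `μ = 0`.
-/

lemma sum_lintegral_le_lintegral_sum {α ι : Type*} [MeasurableSpace α] (μ : Measure α)
    (F : Finset ι) (g : ι → α → ℝ≥0∞) :
    ∑ k ∈ F, ∫⁻ x, g k x ∂μ ≤ ∫⁻ x, ∑ k ∈ F, g k x ∂μ := by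
  induction F using Finset.cons_induction with
  | empty => simp
  | cons k F _ ih =>
    simp only [Finset.sum_cons]
    exact (add_le_add le_rfl ih).trans (le_lintegral_add _ _)

lemma indicator_div_const {α M₀ : Type*} [GroupWithZero M₀] (E : Set α) (f : α → M₀) (c : M₀) :
    (fun x => E.indicator f x / c) = E.indicator (fun x => f x / c) := by
  ext x
  by_cases hx : x ∈ E <;> simp [hx]

lemma tsum_le_mul_of_forall_lt {ι : Type*} {t : ι → ℝ} {K a b : ℝ}
    (h : ∀ a' b', a < a' → b < b' → ∀ F : Finset ι, ∑ k ∈ F, t k ≤ K * a' * b') :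
    ∑' k, t k ≤ K * a * b := by
  have hε : ∀ ε : ℝ, 0 < ε → ∑' k, t k ≤ K * (a + ε) * (b + ε) := fun ε hε =>
    tsum_le_of_sum_le' (by simpa using h _ _ (by linarith) (by linarith) ∅)
      (h _ _ (by linarith) (by linarith))
  have hlim : Filter.Tendsto (fun ε : ℝ => K * (a + ε) * (b + ε)) (nhdsWithin 0 (Ioi 0))
      (nhds (K * a * b)) := by
    have : Continuous fun ε : ℝ => K * (a + ε) * (b + ε) := by fun_prop
    simpa using (this.tendsto 0).mono_left nhdsWithin_le_nhds
  exact ge_of_tendsto hlim (eventually_nhdsWithin_of_forall hε)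

-- A set of reals that is not bounded below has `sInf = 0`, so positivity rules this out.
lemma infOn_le_of_pos {X : Type*} {p : X → ℝ} {s : Set X} (h : 0 < infOn p s) {x : X}
    (hx : x ∈ s) : infOn p s ≤ p x := by
  have hbdd : BddBelow (p '' s) := by
    by_contra hb
    rw [infOn, Real.sInf_of_not_bddBelow hb] at h
    exact lt_irrefl _ h
  exact csInf_le hbdd (mem_image_of_mem p hx)

lemma card_filter_zpow_le {A a t : ℝ} (hA : 1 < A) (ha : 0 < a) {n : ℕ} (hn : a ^ 2 < A ^ n)
    (F : Finset ℤ) :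
    (F.filter fun k => A ^ (k - 1) / a ≤ t ∧ t ≤ A ^ (k + 2) * a).card ≤ n + 3 := by
  set G := F.filter fun k => A ^ (k - 1) / a ≤ t ∧ t ≤ A ^ (k + 2) * a
  rcases G.eq_empty_or_nonempty with hG | hG
  · simp [hG]
  have hA0 : 0 < A := one_pos.trans hA
  set k₀ := G.min' hG
  have hsub : G ⊆ Finset.Icc k₀ (k₀ + (n + 2 : ℕ)) := by
    intro k hk
    have hk₀ := (Finset.mem_filter.mp (G.min'_mem hG)).2.2
    have hkt := (Finset.mem_filter.mp hk).2.1
    have : A ^ (k - 1) < A ^ (k₀ + 2 + n) := by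
      calc A ^ (k - 1) ≤ A ^ (k₀ + 2) * a * a := by
            rw [div_le_iff₀ ha] at hkt
            nlinarith
        _ = a ^ 2 * A ^ (k₀ + 2) := by ring
        _ < A ^ n * A ^ (k₀ + 2) := by gcongr
        _ = A ^ (k₀ + 2 + n) := by
            rw [zpow_add₀ hA0.ne' (k₀ + 2) n, zpow_natCast, mul_comm]
    rw [zpow_lt_zpow_iff_right₀ hA] at this
    rw [Finset.mem_Icc]
    exact ⟨G.min'_le k hk, by push_cast; omega⟩
  calc G.card ≤ (Finset.Icc k₀ (k₀ + (n + 2 : ℕ))).card := Finset.card_le_card hsub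
    _ = n + 3 := by rw [Int.card_Icc]; omega

lemma one_lt_conj {t : ℝ} (ht : 1 < t) : 1 < conj t := by
  rw [conj, lt_div_iff₀ (by linarith)]
  linarith

lemma conj_anti {s t : ℝ} (hs : 1 < s) (hst : s ≤ t) : conj t ≤ conj s := by
  rw [conj, conj, div_le_div_iff₀ (by linarith) (by linarith)]
  nlinarith

lemma inv_conj {t : ℝ} (ht : 1 < t) : (conj t)⁻¹ = 1 - t⁻¹ := by
  rw [conj]
  field_simp

lemma one_sub_le_inv_add_inv_conj {u w s : ℝ} (hu : 1 ≤ u) (hw : 1 < w) (hs : 0 ≤ s)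
    (huw : u ≤ w + s) : 1 - s ≤ u⁻¹ + (conj w)⁻¹ := by
  rw [inv_conj hw]
  suffices w⁻¹ - u⁻¹ ≤ s by linarith
  rw [inv_sub_inv (by positivity) (by positivity)]
  rcases le_total u w with h | h
  · exact (div_nonpos_of_nonpos_of_nonneg (by linarith) (by positivity)).trans hs
  · calc (u - w) / (w * u) ≤ u - w := div_le_self (by linarith) (by nlinarith)
      _ ≤ s := by linarith

lemma rpow_mul_rpow_le_max_rpow {a b α β t : ℝ} (ha0 : 0 ≤ a) (ha1 : a ≤ 1) (hb0 : 0 ≤ b)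
    (hb1 : b ≤ 1) (hα : 0 < α) (hβ : 0 < β) (ht : t ≤ α + β) :
    a ^ α * b ^ β ≤ max a b ^ t := by
  rcases (le_max_of_le_left ha0).eq_or_lt with hM | hM
  · have ha : a = 0 := le_antisymm (hM ▸ le_max_left a b) ha0
    rw [ha, Real.zero_rpow hα.ne', zero_mul]
    exact Real.rpow_nonneg (le_max_of_le_left le_rfl) _
  calc a ^ α * b ^ β ≤ max a b ^ α * max a b ^ β :=
        mul_le_mul (Real.rpow_le_rpow ha0 (le_max_left a b) hα.le)
          (Real.rpow_le_rpow hb0 (le_max_right a b) hβ.le) (by positivity) (by positivity)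
    _ = max a b ^ (α + β) := (Real.rpow_add hM _ _).symm
    _ ≤ max a b ^ t := Real.rpow_le_rpow_of_exponent_ge hM (max_le ha1 hb1) ht

lemma rpow_one_sub_le {M θ s : ℝ} (hM : 0 ≤ M) (hθ : 0 < θ) (hs0 : 0 ≤ s) (hs1 : s ≤ 1) :
    M ^ (1 - s) ≤ θ ^ (-s) * M + θ ^ (1 - s) := by
  rcases le_or_gt θ M with h | h
  · have hM0 : 0 < M := hθ.trans_le h
    calc M ^ (1 - s) = M ^ (-s) * M := by
          rw [sub_eq_neg_add, Real.rpow_add hM0, Real.rpow_one]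
      _ ≤ θ ^ (-s) * M :=
          mul_le_mul_of_nonneg_right (Real.rpow_le_rpow_of_nonpos hθ h (by linarith)) hM
      _ ≤ _ := le_add_of_nonneg_right (Real.rpow_nonneg hθ.le _)
  · calc M ^ (1 - s) ≤ θ ^ (1 - s) := Real.rpow_le_rpow hM h.le (by linarith)
      _ ≤ _ := le_add_of_nonneg_left (by positivity)

lemma rpow_inv_mul_rpow_inv_conj_le {a b P Q s : ℝ} (ha0 : 0 ≤ a) (ha1 : a ≤ 1) (hb0 : 0 ≤ b)
    (hb1 : b ≤ 1) (hP : 1 ≤ P) (hQ : 1 < Q) (hs : 0 ≤ s) (hPQ : P ≤ Q + s) :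
    a ^ P⁻¹ * b ^ (conj Q)⁻¹ ≤ max a b ^ (1 - s) :=
  rpow_mul_rpow_le_max_rpow ha0 ha1 hb0 hb1 (by positivity)
    (inv_pos.mpr (one_pos.trans (one_lt_conj hQ))) (one_sub_le_inv_add_inv_conj hP hQ hs hPQ)

lemma rpow_mul_div_log {ν : ℝ} (hν0 : 0 < ν) (hν1 : ν ≠ 1) (a c : ℝ) :
    ν ^ (a * (c / Real.log ν)) = Real.exp (a * c) := by
  have : Real.log ν ≠ 0 := Real.log_ne_zero_of_pos_of_ne_one hν0 hν1
  rw [Real.rpow_def_of_pos hν0]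
  congr 1
  field_simp

lemma div_neg_log_le {c η ν : ℝ} (hη : 0 < η) (hν0 : 0 < ν) (hν1 : ν < 1)
    (hν : ν ≤ Real.exp (-(c / η))) : c / -Real.log ν ≤ η := by
  have hlog : 0 < -Real.log ν := neg_pos.mpr (Real.log_neg hν0 hν1)
  have : Real.log ν ≤ -(c / η) := (Real.log_le_log hν0 hν).trans (Real.log_exp _).le
  rw [div_le_iff₀ hlog, ← div_le_iff₀' hη]
  linarith

lemma sqrt_div_pow_le_inv_sqrt_pow {ε B : ℝ} (hε : ε ≤ 1) (hB : 1 ≤ B) (n : ℕ) :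
    √(ε / B ^ n) ≤ (√B)⁻¹ ^ n := by
  calc √(ε / B ^ n) ≤ √(((√B)⁻¹ ^ n) ^ 2) := by
        refine Real.sqrt_le_sqrt ?_
        rw [← pow_mul, mul_comm, pow_mul, inv_pow, Real.sq_sqrt (by linarith), inv_pow, ← one_div]
        exact div_le_div_of_nonneg_right hε (by positivity)
    _ = (√B)⁻¹ ^ n := Real.sqrt_sq (by positivity)

-- Annulus weights: geometric decay near `x₀`, `1` in between, `0` where `p`, `q` are constant.
def geomWeight (ρ : ℝ) (k₁ k₂ k : ℤ) : ℝ :=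
  if k ≤ k₁ then ρ ^ (k₁ - k).toNat else if k < k₂ then 1 else 0

lemma sum_geomWeight_le {ρ : ℝ} (hρ0 : 0 ≤ ρ) (hρ1 : ρ < 1) (k₁ k₂ : ℤ) (F : Finset ℤ) :
    ∑ k ∈ F, geomWeight ρ k₁ k₂ k ≤ (1 - ρ)⁻¹ + (Finset.Ioo k₁ k₂).card := by
  simp only [geomWeight]
  rw [Finset.sum_ite, Finset.sum_boole, Finset.filter_filter]
  gcongr
  · rw [← Finset.sum_image (g := fun k => (k₁ - k).toNat) fun a ha b hb hab => by
      simp only [Finset.coe_filter, mem_ofPred_eq] at ha hb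
      dsimp only at hab
      omega]
    exact ((summable_geometric_of_lt_one hρ0 hρ1).sum_le_tsum _ fun _ _ => pow_nonneg hρ0 _).trans
      (tsum_geometric_of_lt_one hρ0 hρ1).le
  · intro k hk
    simp only [Finset.mem_filter, Finset.mem_Ioo] at hk ⊢
    omega

section YoungBoundOn

def YoungBoundOn {X : Type*} (p r : X → ℝ) (E : Set X) (C w : ℝ) : Prop :=
  ∃ P R : ℝ, 0 < P ∧ 0 < R ∧ (∀ x ∈ E, p x ≤ P) ∧ (∀ x ∈ E, r x ≤ R) ∧
    ∀ a b : ℝ, 0 ≤ a → a ≤ 1 → 0 ≤ b → b ≤ 1 → a ^ P⁻¹ * b ^ R⁻¹ ≤ C * (a + b) + w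

variable {X : Type*} {p r q : X → ℝ} {E : Set X}

lemma YoungBoundOn.mono {C C' w w' : ℝ} (h : YoungBoundOn p r E C w) (hC : C ≤ C')
    (hw : w ≤ w') : YoungBoundOn p r E C' w' := by
  obtain ⟨P, R, hP, hR, hpP, hrR, hyoung⟩ := h
  refine ⟨P, R, hP, hR, hpP, hrR, fun a b ha0 ha1 hb0 hb1 => ?_⟩
  have := hyoung a b ha0 ha1 hb0 hb1
  nlinarith

lemma youngBoundOn_zero_one {P R : ℝ} (hP : 0 < P) (hR : 0 < R) (hpP : ∀ x ∈ E, p x ≤ P)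
    (hrR : ∀ x ∈ E, r x ≤ R) : YoungBoundOn p r E 0 1 :=
  ⟨P, R, hP, hR, hpP, hrR, fun a b ha0 ha1 hb0 hb1 => by
    simpa using mul_le_one₀ (Real.rpow_le_one ha0 ha1 (by positivity))
      (Real.rpow_nonneg hb0 _) (Real.rpow_le_one hb0 hb1 (by positivity))⟩

lemma youngBoundOn_conj_one_zero {P Q : ℝ} (hP : 1 ≤ P) (hQ : 1 < Q) (hPQ : P ≤ Q)
    (hpP : ∀ x ∈ E, p x ≤ P) (hqQ : ∀ x ∈ E, Q ≤ q x) :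
    YoungBoundOn p (fun x => conj (q x)) E 1 0 :=
  ⟨P, conj Q, by linarith, one_pos.trans (one_lt_conj hQ), hpP,
    fun x hx => conj_anti hQ (hqQ x hx), fun a b ha0 ha1 hb0 hb1 => by
      have := rpow_inv_mul_rpow_inv_conj_le ha0 ha1 hb0 hb1 hP hQ le_rfl (by linarith)
      rw [sub_zero, Real.rpow_one] at this
      linarith [max_le_add_of_nonneg ha0 hb0]⟩

lemma youngBoundOn_conj_rpow {P Q s θ : ℝ} (hP : 1 ≤ P) (hQ : 1 < Q) (hs0 : 0 ≤ s)
    (hs1 : s ≤ 1) (hPQ : P ≤ Q + s) (hθ : 0 < θ) (hpP : ∀ x ∈ E, p x ≤ P)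
    (hqQ : ∀ x ∈ E, Q ≤ q x) :
    YoungBoundOn p (fun x => conj (q x)) E (θ ^ (-s)) (θ ^ (1 - s)) :=
  ⟨P, conj Q, by linarith, one_pos.trans (one_lt_conj hQ), hpP,
    fun x hx => conj_anti hQ (hqQ x hx), fun a b ha0 ha1 hb0 hb1 => by
      have h1 := rpow_inv_mul_rpow_inv_conj_le ha0 ha1 hb0 hb1 hP hQ hs0 hPQ
      have h2 := rpow_one_sub_le (le_max_of_le_left ha0 : 0 ≤ max a b) hθ hs0 hs1
      have h3 := mul_le_mul_of_nonneg_left (max_le_add_of_nonneg ha0 hb0)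
        (Real.rpow_nonneg hθ.le (-s))
      linarith⟩

lemma youngBoundOn_conj_of_abs_sub_le {p₀ q₀ c ν : ℝ} (hp₀ : 1 ≤ p₀) (hpq₀ : p₀ ≤ q₀)
    (hc : 0 ≤ c) (hν0 : 0 < ν) (hν1 : ν < 1) (hδ : c / -Real.log ν ≤ 1 / 4)
    (hδq : c / -Real.log ν < q₀ - 1) (hp : ∀ x ∈ E, |p₀ - p x| ≤ c / -Real.log ν)
    (hq : ∀ x ∈ E, |q₀ - q x| ≤ c / -Real.log ν) :
    YoungBoundOn p (fun x => conj (q x)) E (Real.exp (2 * c)) √ν := by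
  set δ := c / -Real.log ν
  have hδ0 : 0 ≤ δ := div_nonneg hc (neg_pos.mpr (Real.log_neg hν0 hν1)).le
  refine (youngBoundOn_conj_rpow (P := p₀ + δ) (Q := q₀ - δ) (s := 2 * δ) (by linarith)
    (by linarith) (by positivity) (by linarith) (by linarith) hν0
    (fun x hx => by linarith [(abs_le.mp (hp x hx)).1])
    (fun x hx => by linarith [(abs_le.mp (hq x hx)).2])).mono (le_of_eq ?_) ?_
  · rw [show -(2 * δ) = 2 * (c / Real.log ν) by simp only [δ, div_neg, mul_neg, neg_neg],
      rpow_mul_div_log hν0 hν1.ne]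
  · rw [Real.sqrt_eq_rpow]
    exact Real.rpow_le_rpow_of_exponent_ge hν0 hν1.le (by linarith)

end YoungBoundOn

namespace QMS

variable {X : Type*} [MeasurableSpace X] (S : QMS X)

lemma vnorm_nonneg (e f : X → ℝ) : 0 ≤ S.VNorm e f :=
  Real.sInf_nonneg fun _ hl => hl.1.le

lemma vnorm_le_of_modular_div_le_one {e f : X → ℝ} {l : ℝ} (hl : 0 < l)
    (h : S.modular e (fun x => f x / l) ≤ 1) : S.VNorm e f ≤ l :=
  csInf_le ⟨0, fun _ hx => hx.1.le⟩ ⟨hl, h⟩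

lemma vnorm_eq_zero_of_measure_univ_eq_zero (h : S.μ univ = 0) (e f : X → ℝ) :
    S.VNorm e f = 0 := by
  have : {l : ℝ | 0 < l ∧ S.modular e (fun x => f x / l) ≤ 1} = Ioi 0 := by
    ext l
    simp [modular, Measure.measure_univ_eq_zero.mp h]
  rw [VNorm, this, csInf_Ioi]

lemma modular_mono {e f g : X → ℝ} (he : ∀ x, 0 ≤ e x) (h : ∀ x, |f x| ≤ |g x|) :
    S.modular e f ≤ S.modular e g :=
  lintegral_mono fun x => ENNReal.ofReal_le_ofReal
    (Real.rpow_le_rpow (abs_nonneg _) (h x) (he x))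

lemma modular_div_le {e f : X → ℝ} (he : ∀ x, 0 < e x) {c K : ℝ} (hc : 0 < c)
    (hK : ∀ x, f x ≠ 0 → c ^ (-e x) ≤ K) :
    S.modular e (fun x => f x / c) ≤ ENNReal.ofReal K * S.modular e f := by
  rw [modular, modular, ← lintegral_const_mul' _ _ ENNReal.ofReal_ne_top]
  refine lintegral_mono fun x => ?_
  by_cases hfx : f x = 0
  · simp [hfx, Real.zero_rpow (he x).ne']
  have hK0 : 0 ≤ K := (Real.rpow_pos_of_pos hc _).le.trans (hK x hfx)
  rw [← ENNReal.ofReal_mul hK0, abs_div, abs_of_pos hc, Real.div_rpow (abs_nonneg _) hc.le,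
    div_eq_inv_mul, ← Real.rpow_neg hc.le]
  exact ENNReal.ofReal_le_ofReal
    (mul_le_mul_of_nonneg_right (hK x hfx) (Real.rpow_nonneg (abs_nonneg _) _))

lemma exists_modular_div_le_one {e f : X → ℝ} {el : ℝ} (hel : 0 < el) (he : ∀ x, el ≤ e x)
    (hf : S.MemVL e f) : ∃ l : ℝ, 0 < l ∧ S.modular e (fun x => f x / l) ≤ 1 := by
  set m := (S.modular e f).toReal
  set l : ℝ := (m + 1) ^ el⁻¹
  have hm : 0 ≤ m := ENNReal.toReal_nonneg
  have hl1 : 1 ≤ l := Real.one_le_rpow (by linarith) (inv_nonneg.mpr hel.le)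
  have hl0 : 0 < l := one_pos.trans_le hl1
  refine ⟨l, hl0, (S.modular_div_le (fun x => hel.trans_le (he x)) hl0
    (K := l ^ (-el)) fun x _ => Real.rpow_le_rpow_of_exponent_le hl1 (neg_le_neg (he x))).trans ?_⟩
  have hlel : l ^ (-el) = (m + 1)⁻¹ := by
    rw [Real.rpow_neg hl0.le, ← Real.rpow_mul (by linarith), inv_mul_cancel₀ hel.ne',
      Real.rpow_one]
  rw [hlel, ← ENNReal.ofReal_toReal hf.ne, ← ENNReal.ofReal_mul (by positivity),
    ENNReal.ofReal_le_one, inv_mul_le_iff₀ (by linarith)]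
  linarith

lemma modular_div_le_one_of_vnorm_lt {e f : X → ℝ} {el : ℝ} (hel : 0 < el)
    (he : ∀ x, el ≤ e x) (hf : S.MemVL e f) {Λ : ℝ} (hΛ : S.VNorm e f < Λ) :
    S.modular e (fun x => f x / Λ) ≤ 1 := by
  obtain ⟨l, ⟨hl0, hl⟩, hlΛ⟩ :=
    exists_lt_of_csInf_lt (S.exists_modular_div_le_one hel he hf) hΛ
  refine le_trans (S.modular_mono (fun x => hel.le.trans (he x)) fun x => ?_) hl
  rw [abs_div, abs_div, abs_of_pos hl0, abs_of_pos (hl0.trans hlΛ)]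
  exact div_le_div_of_nonneg_left (abs_nonneg _) hl0 hlΛ.le

lemma vnorm_le_mul_modular_rpow {e f : X → ℝ} (he : ∀ x, 0 < e x) {Λ P : ℝ} (hΛ : 0 < Λ)
    (hP : 0 < P) (heP : ∀ x, f x ≠ 0 → e x ≤ P) (hm : S.modular e (fun x => f x / Λ) ≤ 1) :
    S.VNorm e f ≤ Λ * (S.modular e (fun x => f x / Λ)).toReal ^ P⁻¹ := by
  set m := (S.modular e (fun x => f x / Λ)).toReal
  have hm0 : 0 ≤ m := ENNReal.toReal_nonneg
  have key : ∀ t, 0 < t → t ≤ 1 → m ≤ t ^ P → S.VNorm e f ≤ Λ * t := by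
    intro t ht0 ht1 hmt
    refine S.vnorm_le_of_modular_div_le_one (mul_pos hΛ ht0) ?_
    have hK : ∀ x, f x / Λ ≠ 0 → t ^ (-e x) ≤ t ^ (-P) := fun x hx =>
      Real.rpow_le_rpow_of_exponent_ge ht0 ht1
        (neg_le_neg (heP x (div_ne_zero_iff.mp hx).1))
    have := S.modular_div_le (f := fun x => f x / Λ) he ht0 hK
    simp only [div_div] at this
    refine this.trans ?_
    rw [← ENNReal.ofReal_toReal (ne_top_of_le_ne_top ENNReal.one_ne_top hm),
      ← ENNReal.ofReal_mul (by positivity), ENNReal.ofReal_le_one, Real.rpow_neg ht0.le,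
      inv_mul_le_iff₀ (by positivity), mul_one]
    exact hmt
  rcases hm0.eq_or_lt with hm0 | hm0
  · rw [← hm0, Real.zero_rpow (inv_ne_zero hP.ne'), mul_zero]
    refine le_of_forall_pos_le_add fun ε hε => ?_
    have ht0 : 0 < min 1 (ε / Λ) := lt_min one_pos (div_pos hε hΛ)
    calc S.VNorm e f ≤ Λ * min 1 (ε / Λ) :=
          key _ ht0 (min_le_left _ _) (hm0 ▸ (Real.rpow_pos_of_pos ht0 _).le)
      _ ≤ Λ * (ε / Λ) := mul_le_mul_of_nonneg_left (min_le_right _ _) hΛ.le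
      _ = 0 + ε := by field_simp; ring
  · refine key _ (Real.rpow_pos_of_pos hm0 _) (Real.rpow_le_one hm0.le ?_ (by positivity)) ?_
    · simpa using ENNReal.toReal_mono ENNReal.one_ne_top hm
    · rw [← Real.rpow_mul hm0.le, inv_mul_cancel₀ hP.ne', Real.rpow_one]

lemma modular_indicator {e : X → ℝ} (he : ∀ x, 0 < e x) (E : Set X) (f : X → ℝ) :
    S.modular e (E.indicator f) =
      ∫⁻ x, E.indicator (fun x => ENNReal.ofReal (|f x| ^ e x)) x ∂S.μ := by
  refine lintegral_congr fun x => ?_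
  by_cases hx : x ∈ E <;> simp [hx, Real.zero_rpow (he x).ne']

open Classical in
lemma sum_modular_indicator_le {ι : Type*} {e : X → ℝ} (he : ∀ x, 0 < e x) {E : ι → Set X}
    {F : Finset ι} {N : ℕ} (hN : ∀ x, (F.filter (fun k => x ∈ E k)).card ≤ N) (f : X → ℝ) :
    ∑ k ∈ F, S.modular e ((E k).indicator f) ≤ N * S.modular e f := by
  simp only [S.modular_indicator he]
  refine (sum_lintegral_le_lintegral_sum _ _ _).trans ?_
  rw [modular, ← lintegral_const_mul' _ _ (ENNReal.natCast_ne_top N)]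
  refine lintegral_mono fun x => ?_
  simp only [Set.indicator_apply, ← Finset.sum_filter, Finset.sum_const, nsmul_eq_mul]
  exact mul_le_mul_left (by exact_mod_cast hN x) _

lemma modular_indicator_le {e : X → ℝ} (he : ∀ x, 0 ≤ e x) (E : Set X) (f : X → ℝ) :
    S.modular e (E.indicator f) ≤ S.modular e f :=
  S.modular_mono he fun x => by simpa only [Real.norm_eq_abs] using norm_indicator_le_norm_self f x

lemma toReal_modular_indicator_le_one {e : X → ℝ} (he : ∀ x, 0 ≤ e x) (E : Set X)
    {f : X → ℝ} (hf : S.modular e f ≤ 1) : (S.modular e (E.indicator f)).toReal ≤ 1 := by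
  simpa using ENNReal.toReal_mono ENNReal.one_ne_top ((S.modular_indicator_le he E f).trans hf)

lemma vnorm_indicator_le_mul_modular_rpow {e f : X → ℝ} (he : ∀ x, 0 < e x) {E : Set X}
    {Λ P : ℝ} (hΛ : 0 < Λ) (hP : 0 < P) (heP : ∀ x ∈ E, e x ≤ P)
    (hf : S.modular e (fun x => f x / Λ) ≤ 1) :
    S.VNorm e (E.indicator f) ≤
      Λ * (S.modular e (E.indicator fun x => f x / Λ)).toReal ^ P⁻¹ := by
  rw [← indicator_div_const]
  refine S.vnorm_le_mul_modular_rpow he hΛ hP (fun x hx => heP x (mem_of_indicator_ne_zero hx)) ?_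
  rw [indicator_div_const]
  exact (S.modular_indicator_le (fun x => (he x).le) E _).trans hf

lemma vnorm_indicator_mul_le_of_youngBoundOn {p r : X → ℝ} (hp : ∀ x, 0 < p x)
    (hr : ∀ x, 0 < r x) {E : Set X} {C w : ℝ} (hE : YoungBoundOn p r E C w)
    {f g : X → ℝ} {Λf Λg : ℝ} (hΛf : 0 < Λf) (hΛg : 0 < Λg)
    (hf : S.modular p (fun x => f x / Λf) ≤ 1) (hg : S.modular r (fun x => g x / Λg) ≤ 1) :
    S.VNorm p (E.indicator f) * S.VNorm r (E.indicator g) ≤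
      Λf * Λg * (C * ((S.modular p (E.indicator fun x => f x / Λf)).toReal +
        (S.modular r (E.indicator fun x => g x / Λg)).toReal) + w) := by
  obtain ⟨P, R, hP, hR, hpP, hrR, hyoung⟩ := hE
  have hm1 := S.toReal_modular_indicator_le_one (fun x => (hp x).le) E hf
  have hn1 := S.toReal_modular_indicator_le_one (fun x => (hr x).le) E hg
  calc S.VNorm p (E.indicator f) * S.VNorm r (E.indicator g)
      ≤ (Λf * (S.modular p (E.indicator fun x => f x / Λf)).toReal ^ P⁻¹) *
          (Λg * (S.modular r (E.indicator fun x => g x / Λg)).toReal ^ R⁻¹) :=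
        mul_le_mul (S.vnorm_indicator_le_mul_modular_rpow hp hΛf hP hpP hf)
          (S.vnorm_indicator_le_mul_modular_rpow hr hΛg hR hrR hg) (S.vnorm_nonneg _ _)
          (by positivity)
    _ = Λf * Λg * ((S.modular p (E.indicator fun x => f x / Λf)).toReal ^ P⁻¹ *
          (S.modular r (E.indicator fun x => g x / Λg)).toReal ^ R⁻¹) := by ring
    _ ≤ _ := mul_le_mul_of_nonneg_left
        (hyoung _ _ ENNReal.toReal_nonneg hm1 ENNReal.toReal_nonneg hn1) (by positivity)

open Classical in
lemma sum_toReal_modular_indicator_le {ι : Type*} {e : X → ℝ} (he : ∀ x, 0 < e x)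
    {E : ι → Set X} {N : ℕ} (hN : ∀ x (F : Finset ι), (F.filter (fun k => x ∈ E k)).card ≤ N)
    {h : X → ℝ} (hh : S.modular e h ≤ 1) (F : Finset ι) :
    ∑ k ∈ F, (S.modular e ((E k).indicator h)).toReal ≤ N := by
  have hfin : ∀ k, S.modular e ((E k).indicator h) ≠ ⊤ := fun k =>
    ne_top_of_le_ne_top ENNReal.one_ne_top
      ((S.modular_indicator_le (fun x => (he x).le) _ _).trans hh)
  rw [← ENNReal.toReal_sum fun k _ => hfin k]
  simpa using ENNReal.toReal_mono (by simp)
    ((S.sum_modular_indicator_le he (hN · F) h).trans (mul_le_of_le_one_right' hh))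

open Classical in
theorem tsum_vnorm_indicator_mul_le {ι : Type*} {p r : X → ℝ} {pl rl : ℝ} (hpl : 0 < pl)
    (hp : ∀ x, pl ≤ p x) (hrl : 0 < rl) (hr : ∀ x, rl ≤ r x) {E : ι → Set X} {N : ℕ}
    (hN : ∀ x (F : Finset ι), (F.filter (fun k => x ∈ E k)).card ≤ N) {C W : ℝ} {w : ι → ℝ}
    (hC : 0 ≤ C) (hW : ∀ F : Finset ι, ∑ k ∈ F, w k ≤ W)
    (hE : ∀ k, YoungBoundOn p r (E k) C (w k)) {f g : X → ℝ}
    (hf : S.MemVL p f) (hg : S.MemVL r g) :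
    ∑' k, S.VNorm p ((E k).indicator f) * S.VNorm r ((E k).indicator g) ≤
      (2 * N * C + W) * S.VNorm p f * S.VNorm r g := by
  have hp0 : ∀ x, 0 < p x := fun x => hpl.trans_le (hp x)
  have hr0 : ∀ x, 0 < r x := fun x => hrl.trans_le (hr x)
  refine tsum_le_mul_of_forall_lt fun Λf Λg hΛf hΛg F => ?_
  have hΛf0 : 0 < Λf := (S.vnorm_nonneg _ _).trans_lt hΛf
  have hΛg0 : 0 < Λg := (S.vnorm_nonneg _ _).trans_lt hΛg
  have hmf := S.modular_div_le_one_of_vnorm_lt hpl hp hf hΛf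
  have hmg := S.modular_div_le_one_of_vnorm_lt hrl hr hg hΛg
  calc ∑ k ∈ F, S.VNorm p ((E k).indicator f) * S.VNorm r ((E k).indicator g)
      ≤ ∑ k ∈ F, Λf * Λg * (C * ((S.modular p ((E k).indicator fun x => f x / Λf)).toReal +
          (S.modular r ((E k).indicator fun x => g x / Λg)).toReal) + w k) :=
        Finset.sum_le_sum fun k _ =>
          S.vnorm_indicator_mul_le_of_youngBoundOn hp0 hr0 (hE k) hΛf0 hΛg0 hmf hmg
    _ = Λf * Λg * (C * (∑ k ∈ F, (S.modular p ((E k).indicator fun x => f x / Λf)).toReal +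
          ∑ k ∈ F, (S.modular r ((E k).indicator fun x => g x / Λg)).toReal) +
          ∑ k ∈ F, w k) := by
        rw [← Finset.sum_add_distrib, Finset.mul_sum, ← Finset.sum_add_distrib, Finset.mul_sum]
    _ ≤ Λf * Λg * (C * (N + N) + W) := by
        gcongr
        exacts [S.sum_toReal_modular_indicator_le hp0 hN hmf F,
          S.sum_toReal_modular_indicator_le hr0 hN hmg F, hW F]
    _ = (2 * N * C + W) * Λf * Λg := by ring

lemma exists_lt_d (hL : S.L = ⊤) (x : X) (R : ℝ) : ∃ y, R < S.d x y := by
  by_contra! h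
  have hbound : ∀ u v, S.d u v ≤ S.a₁ * (S.a₀ * max R 0 + max R 0) := fun u v =>
    (S.d_triangle u v x).trans (mul_le_mul_of_nonneg_left (add_le_add
      ((S.d_symm u x).trans (mul_le_mul_of_nonneg_left ((h u).trans (le_max_left _ _))
        S.a₀_pos.le)) ((h v).trans (le_max_left _ _))) S.a₁_pos.le)
  have : S.L ≤ ENNReal.ofReal (S.a₁ * (S.a₀ * max R 0 + max R 0)) :=
    iSup₂_le fun u v => ENNReal.ofReal_le_ofReal (hbound u v)
  rw [hL] at this
  exact ENNReal.ofReal_ne_top (top_le_iff.mp this)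

-- A ball containing all of `X` cannot grow by the factor `B > 1` under dilation by `A`.
lemma measure_univ_eq_zero_of_L_ne_top {A B : ℝ} (hL : S.L ≠ ⊤) (hA : 0 < A) (hB : 1 < B)
    (hrd : S.revDoubling A B) : S.μ univ = 0 := by
  rcases isEmpty_or_nonempty X with hX | ⟨⟨x⟩⟩
  · rw [univ_eq_empty_iff.mpr hX, measure_empty]
  set R := S.L.toReal / A + S.L.toReal + 1
  have hL0 : 0 ≤ S.L.toReal := ENNReal.toReal_nonneg
  have hball : ∀ r, S.L.toReal < r → S.ball x r = univ := fun r hr =>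
    eq_univ_of_forall fun y => lt_of_le_of_lt (by
      simpa [ENNReal.toReal_ofReal (S.d_nonneg x y)] using
        ENNReal.toReal_mono hL (le_iSup₂ (f := fun u v => ENNReal.ofReal (S.d u v)) x y)) hr
  have hR : S.L.toReal < R := by
    have : 0 ≤ S.L.toReal / A := by positivity
    linarith
  have hAR : S.L.toReal < A * R := by
    rw [show A * R = A * (S.L.toReal / A) + A * S.L.toReal + A by ring,
      mul_div_cancel₀ _ hA.ne']
    nlinarith
  have h := hrd x R (hL0.trans_lt hR)
  rw [hball R hR, hball (A * R) hAR] at h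
  have hfin : S.μ univ ≠ ⊤ := hball R hR ▸ (S.ball_lt_top x R).ne
  by_contra h0
  have : ENNReal.ofReal B ≤ 1 :=
    (ENNReal.mul_le_mul_iff_left h0 hfin).mp (by rwa [one_mul])
  exact absurd this (not_le.mpr (ENNReal.one_lt_ofReal.mpr hB))

lemma pow_mul_measure_ball_le {A B : ℝ} (hA : 0 < A) (hB : 0 ≤ B) (hrd : S.revDoubling A B)
    (x : X) {r : ℝ} (hr : 0 < r) (n : ℕ) :
    B ^ n * (S.μ (S.ball x r)).toReal ≤ (S.μ (S.ball x (A ^ n * r))).toReal := by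
  induction n with
  | zero => simp
  | succ n ih =>
    calc B ^ (n + 1) * (S.μ (S.ball x r)).toReal
        ≤ B * (S.μ (S.ball x (A ^ n * r))).toReal := by
          rw [pow_succ', mul_assoc]; exact mul_le_mul_of_nonneg_left ih hB
      _ = (ENNReal.ofReal B * S.μ (S.ball x (A ^ n * r))).toReal := by
          rw [ENNReal.toReal_mul, ENNReal.toReal_ofReal hB]
      _ ≤ (S.μ (S.ball x (A ^ (n + 1) * r))).toReal := by
          rw [pow_succ', mul_assoc]
          exact ENNReal.toReal_mono (S.ball_lt_top _ _).ne (hrd x _ (by positivity))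

lemma exists_measure_ball_zpow_le {A B : ℝ} (hA : 1 < A) (hB : 1 < B)
    (hrd : S.revDoubling A B) (x : X) {c b ε : ℝ} (hc : 0 < c) (hb : 0 < b) (hε : 0 < ε) :
    ∃ k₁ : ℤ, A ^ k₁ * c ≤ b ∧
      ∀ n : ℕ, (S.μ (S.ball x (A ^ (k₁ - n) * c))).toReal * B ^ n ≤ ε := by
  have hA0 : 0 < A := one_pos.trans hA
  obtain ⟨j, hj⟩ := exists_pow_lt_of_lt_one (div_pos hb hc) (inv_lt_one_of_one_lt₀ hA)
  set M := (S.μ (S.ball x (A ^ (-j : ℤ) * c))).toReal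
  obtain ⟨m, hm⟩ := pow_unbounded_of_one_lt (M / ε) hB
  refine ⟨-j - m, ?_, fun n => ?_⟩
  · calc A ^ (-j - m : ℤ) * c ≤ A ^ (-j : ℤ) * c := by
          gcongr
          · exact hA.le
          · omega
      _ ≤ b := by
          rw [zpow_neg, zpow_natCast, ← inv_pow, ← le_div_iff₀ hc]
          exact hj.le
  · have h := S.pow_mul_measure_ball_le hA0 (by linarith) hrd x
      (r := A ^ (-j - m - n : ℤ) * c) (by positivity) (n + m)
    have hrad : A ^ (n + m) * (A ^ (-j - m - n : ℤ) * c) = A ^ (-j : ℤ) * c := by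
      rw [← mul_assoc, ← zpow_natCast, ← zpow_add₀ hA0.ne']
      congr 2
      push_cast; ring
    rw [hrad, pow_add] at h
    rw [div_lt_iff₀ hε] at hm
    have hBm : 0 < B ^ m := by positivity
    nlinarith [ENNReal.toReal_nonneg (a := S.μ (S.ball x (A ^ (-j - m - n : ℤ) * c)))]

lemma mem_I2k_iff (hL : S.L = ⊤) {x₀ y : X} {A : ℝ} {k : ℤ} :
    y ∈ S.I2k x₀ A k ↔ A ^ (k - 1) / S.a₁ ≤ S.d x₀ y ∧ S.d x₀ y ≤ A ^ (k + 2) * S.a₁ := by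
  rw [I2k, if_pos hL]
  simp only [cball, ball, mem_sdiff, mem_ofPred_eq, not_lt]
  exact and_comm

open Classical in
lemma exists_card_filter_mem_I2k_le (hL : S.L = ⊤) {A : ℝ} (hA : 1 < A) (x₀ : X) :
    ∃ N : ℕ, ∀ x (F : Finset ℤ), (F.filter fun k => x ∈ S.I2k x₀ A k).card ≤ N := by
  obtain ⟨n, hn⟩ := pow_unbounded_of_one_lt (S.a₁ ^ 2) hA
  refine ⟨n + 3, fun x F => ?_⟩
  simpa only [S.mem_I2k_iff hL] using card_filter_zpow_le hA S.a₁_pos hn F (t := S.d x₀ x)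

lemma abs_sub_le_of_measure_ball_le {p : X → ℝ} {x : X} {b c : ℝ} (hc : 0 ≤ c)
    (hLH : ∀ y, S.d x y ≤ b → |p x - p y| ≤ c / -Real.log (S.mB x y)) {r ν : ℝ}
    (hrb : r ≤ b) (hν0 : 0 < ν) (hν1 : ν < 1) (hμ : (S.μ (S.ball x r)).toReal ≤ ν)
    {y : X} (hy : S.d x y ≤ r) : |p x - p y| ≤ c / -Real.log ν := by
  refine (hLH y (hy.trans hrb)).trans ?_
  have hlog : 0 < -Real.log ν := neg_pos.mpr (Real.log_neg hν0 hν1)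
  have hmB : S.mB x y ≤ ν := (ENNReal.toReal_mono (S.ball_lt_top x r).ne
    (measure_mono fun z (hz : S.d x z < S.d x y) => hz.trans_le hy)).trans hμ
  rcases (ENNReal.toReal_nonneg : 0 ≤ S.mB x y).eq_or_lt with h0 | h0
  · rw [show S.mB x y = 0 from h0.symm, Real.log_zero, neg_zero, _root_.div_zero]
    positivity
  · exact div_le_div_of_nonneg_left hc hlog (neg_le_neg (Real.log_le_log h0 hmB))

-- By reverse doubling `ν = ε B⁻ⁿ` bounds the measure of the ball carrying `I_{2,k₁-n}`, so
-- `p`, `q` oscillate there by at most `δ = c / (-log ν)`, and the loss `ν ^ (-2δ) = exp (2c)`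
-- is uniform in `n`.
lemma exists_youngBoundOn_I2k_of_le (hL : S.L = ⊤) {A B : ℝ} (hA : 1 < A) (hB : 1 < B)
    (hrd : S.revDoubling A B) {p q : X → ℝ} {pm : ℝ} (hpm : 1 < pm) (hp : ∀ x, pm ≤ p x)
    (hpq : ∀ x, p x ≤ q x) {x₀ : X} (hpLH : S.LHAt p x₀) (hqLH : S.LHAt q x₀) :
    ∃ (k₁ : ℤ) (C : ℝ), ∀ k ≤ k₁, YoungBoundOn p (fun x => conj (q x)) (S.I2k x₀ A k) C
      ((√B)⁻¹ ^ (k₁ - k).toNat) := by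
  obtain ⟨bp, cp, hbp, hcp, hLHp⟩ := hpLH
  obtain ⟨bq, cq, hbq, hcq, hLHq⟩ := hqLH
  set c := max cp cq
  set η := min ((pm - 1) / 2) (1 / 4)
  have hη : 0 < η := lt_min (by linarith) (by norm_num)
  set ε := min (Real.exp (-(c / η))) (1 / 2)
  have hε0 : 0 < ε := lt_min (Real.exp_pos _) (by norm_num)
  have hr₀ : 0 < A ^ 2 * S.a₁ := mul_pos (pow_pos (one_pos.trans hA) 2) S.a₁_pos
  obtain ⟨k₁, hk₁b, hk₁μ⟩ := S.exists_measure_ball_zpow_le hA hB hrd x₀ hr₀ (lt_min hbp hbq) hε0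
  refine ⟨k₁, Real.exp (2 * c), fun k hk => ?_⟩
  obtain ⟨n, rfl⟩ : ∃ n : ℕ, k = k₁ - n := ⟨(k₁ - k).toNat, by omega⟩
  rw [_root_.sub_sub_cancel, Int.toNat_natCast]
  set ν := ε / B ^ n
  have hν0 : 0 < ν := by positivity
  have hνε : ν ≤ ε := div_le_self hε0.le (one_le_pow₀ hB.le)
  have hν1 : ν < 1 := hνε.trans_lt ((min_le_right _ _).trans_lt (by norm_num))
  have hlog : 0 < -Real.log ν := neg_pos.mpr (Real.log_neg hν0 hν1)
  have hδ : c / -Real.log ν ≤ η := div_neg_log_le hη hν0 hν1 (hνε.trans (min_le_left _ _))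
  have hrad : A ^ (k₁ - n) * (A ^ 2 * S.a₁) = A ^ (k₁ - n + 2) * S.a₁ := by
    rw [zpow_add₀ (one_pos.trans hA).ne', zpow_two]
    ring
  have hμ := hk₁μ n
  rw [hrad, ← le_div_iff₀ (by positivity)] at hμ
  have hrb : A ^ (k₁ - n + 2) * S.a₁ ≤ min bp bq := by
    refine le_trans ?_ hk₁b
    rw [← hrad]
    exact mul_le_mul_of_nonneg_right (zpow_le_zpow_right₀ hA.le (by omega)) hr₀.le
  have hosc : ∀ {e : X → ℝ} {b' c' : ℝ}, min bp bq ≤ b' → c' ≤ c → 0 ≤ c' →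
      (∀ y, S.d x₀ y ≤ b' → |e x₀ - e y| ≤ c' / -Real.log (S.mB x₀ y)) →
      ∀ y ∈ S.I2k x₀ A (k₁ - n), |e x₀ - e y| ≤ c / -Real.log ν := fun hb' hc' hc'0 hLH y hy =>
    (S.abs_sub_le_of_measure_ball_le hc'0 hLH (hrb.trans hb') hν0 hν1 hμ
      ((S.mem_I2k_iff hL).mp hy).2).trans (div_le_div_of_nonneg_right hc' hlog.le)
  refine (youngBoundOn_conj_of_abs_sub_le (hpm.trans_le (hp x₀)).le (hpq x₀)
    (hcp.le.trans (le_max_left _ _)) hν0 hν1 (hδ.trans (min_le_right _ _))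
    (by linarith [hp x₀, hpq x₀, min_le_left ((pm - 1) / 2) (1 / 4)])
    (hosc (min_le_left _ _) (le_max_left _ _) hcp.le hLHp)
    (hosc (min_le_right _ _) (le_max_right _ _) hcq.le hLHq)).mono le_rfl
    (sqrt_div_pow_le_inv_sqrt_pow ((min_le_right _ _).trans (by norm_num)) hB.le n)

lemma exists_youngBoundOn_I2k_of_ge (hL : S.L = ⊤) {A : ℝ} (hA : 1 < A) {p q : X → ℝ}
    (hp : ∀ x, 1 < p x) (hpq : ∀ x, p x ≤ q x) {x₀ : X} {a pc qc : ℝ}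
    (hconst : ∀ x, a < S.d x₀ x → p x = pc ∧ q x = qc) :
    ∃ k₂ : ℤ, ∀ k, k₂ ≤ k → YoungBoundOn p (fun x => conj (q x)) (S.I2k x₀ A k) 1 0 := by
  obtain ⟨y₀, hy₀⟩ := S.exists_lt_d hL x₀ a
  obtain ⟨hpc, hqc⟩ := hconst y₀ hy₀
  obtain ⟨m, hm⟩ := pow_unbounded_of_one_lt (a * S.a₁) hA
  refine ⟨m + 1, fun k hk => ?_⟩
  have hfar : ∀ y ∈ S.I2k x₀ A k, a < S.d x₀ y := fun y hy => by
    refine lt_of_lt_of_le ?_ ((S.mem_I2k_iff hL).mp hy).1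
    rw [lt_div_iff₀ S.a₁_pos]
    calc a * S.a₁ < A ^ m := hm
      _ = A ^ (m : ℤ) := (zpow_natCast A m).symm
      _ ≤ A ^ (k - 1) := zpow_le_zpow_right₀ hA.le (by omega)
  exact youngBoundOn_conj_one_zero (hpc ▸ (hp y₀).le) (hqc ▸ (hp y₀).trans_le (hpq y₀))
    (hpc ▸ hqc ▸ hpq y₀) (fun y hy => (hconst y (hfar y hy)).1.le)
    (fun y hy => (hconst y (hfar y hy)).2.ge)

lemma exists_youngBoundOn_I2k (hL : S.L = ⊤) {A B : ℝ} (hA : 1 < A) (hB : 1 < B)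
    (hrd : S.revDoubling A B) {p q : X → ℝ} {pm Q : ℝ} (hpm : 1 < pm) (hp : ∀ x, pm ≤ p x)
    (hpq : ∀ x, p x ≤ q x) (hqQ : ∀ x, q x ≤ Q) {x₀ : X} (hpLH : S.LHAt p x₀)
    (hqLH : S.LHAt q x₀) {a pc qc : ℝ} (hconst : ∀ x, a < S.d x₀ x → p x = pc ∧ q x = qc) :
    ∃ (C W : ℝ) (w : ℤ → ℝ), 0 ≤ C ∧ (∀ F : Finset ℤ, ∑ k ∈ F, w k ≤ W) ∧
      ∀ k, YoungBoundOn p (fun x => conj (q x)) (S.I2k x₀ A k) C (w k) := by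
  obtain ⟨k₁, C, hsmall⟩ := S.exists_youngBoundOn_I2k_of_le hL hA hB hrd hpm hp hpq hpLH hqLH
  obtain ⟨k₂, hlarge⟩ := S.exists_youngBoundOn_I2k_of_ge hL hA
    (fun x => hpm.trans_le (hp x)) hpq hconst
  have hρ1 : (√B)⁻¹ < 1 := inv_lt_one_of_one_lt₀ (Real.lt_sqrt_of_sq_lt (by linarith))
  refine ⟨max C 1, _, geomWeight (√B)⁻¹ k₁ k₂, by positivity,
    sum_geomWeight_le (by positivity) hρ1 k₁ k₂, fun k => ?_⟩
  rw [geomWeight]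
  split_ifs with h₁ h₂
  · exact (hsmall k h₁).mono (le_max_left _ _) le_rfl
  · refine (youngBoundOn_zero_one (P := Q) (R := conj pm) ?_ ?_ (fun x _ => (hpq x).trans (hqQ x))
      (fun x _ => conj_anti hpm ((hp x).trans (hpq x)))).mono (by positivity) le_rfl
    · linarith [hp x₀, hpq x₀, hqQ x₀]
    · exact one_pos.trans (one_lt_conj hpm)
  · exact (hlarge k (not_lt.mp h₂)).mono (le_max_right _ _) le_rfl

end QMS

end TwoWeight

open TwoWeight in
theorem statement7_general {X : Type*} [MeasurableSpace X]
    (S : QMS X) (A B : ℝ) (hA : 1 < A) (hB : 1 < B)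
    (hrd : S.revDoubling A B)
    (p q : X → ℝ)
    (hp1 : 1 < infOn p Set.univ) (hpq : ∀ x, p x ≤ q x)
    (hqbdd : BddAbove (Set.range q))
    (x₀ : X) (hpLH : S.LHAt p x₀) (hqLH : S.LHAt q x₀)
    (hconst : S.L = ⊤ →
      ∃ a : ℝ, 0 < a ∧ ∃ pc qc : ℝ, ∀ x, a < S.d x₀ x → p x = pc ∧ q x = qc) :
    ∃ C : ℝ, 0 < C ∧ ∀ f g : X → ℝ,
      S.MemVL p f → S.MemVL (fun x => conj (q x)) g →
      (∑' k : ℤ, S.VNorm p ((S.I2k x₀ A k).indicator f) *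
          S.VNorm (fun x => conj (q x)) ((S.I2k x₀ A k).indicator g))
        ≤ C * S.VNorm p f * S.VNorm (fun x => conj (q x)) g := by
  by_cases hL : S.L = ⊤
  · have hp : ∀ x, infOn p univ ≤ p x := fun x => infOn_le_of_pos (one_pos.trans hp1) (mem_univ x)
    obtain ⟨Q, hQ⟩ := hqbdd
    have hqQ : ∀ x, q x ≤ Q := fun x => hQ (mem_range_self x)
    have hQ1 : 1 < Q := hp1.trans_le ((hp x₀).trans ((hpq x₀).trans (hqQ x₀)))
    obtain ⟨a, -, pc, qc, hpc⟩ := hconst hL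
    obtain ⟨N, hN⟩ := S.exists_card_filter_mem_I2k_le hL hA x₀
    obtain ⟨C, W, w, hC, hW, hE⟩ :=
      S.exists_youngBoundOn_I2k hL hA hB hrd hp1 hp hpq hqQ hpLH hqLH hpc
    have hW0 : 0 ≤ W := by simpa using hW ∅
    refine ⟨2 * N * C + W + 1, by positivity, fun f g hf hg => ?_⟩
    calc _ ≤ (2 * N * C + W) * S.VNorm p f * S.VNorm (fun x => conj (q x)) g :=
          S.tsum_vnorm_indicator_mul_le (one_pos.trans hp1) hp (one_pos.trans (one_lt_conj hQ1))
            (fun x => conj_anti ((hp1.trans_le (hp x)).trans_le (hpq x)) (hqQ x)) hN hC hW hE hf hg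
      _ ≤ _ := mul_le_mul_of_nonneg_right (mul_le_mul_of_nonneg_right (by linarith)
          (S.vnorm_nonneg _ _)) (S.vnorm_nonneg _ _)
  · refine ⟨1, one_pos, fun f g _ _ => ?_⟩
    simp [S.vnorm_eq_zero_of_measure_univ_eq_zero
      (S.measure_univ_eq_zero_of_L_ne_top hL (one_pos.trans hA) hB hrd)]

open TwoWeight in
/-- Lemma 1.12. -/
theorem statement7 {X : Type*} [MeasurableSpace X] [Nonempty X]
    (S : QMS X) (hdub : S.doubling) (A B : ℝ) (hA : 1 < A) (hB : 1 < B)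
    (hrd : S.revDoubling A B)
    (p q : X → ℝ) (hpm : Measurable p) (hqm : Measurable q)
    (hp1 : 1 < infOn p Set.univ) (hpq : ∀ x, p x ≤ q x)
    (hqbdd : BddAbove (Set.range q))
    (x₀ : X) (hpLH : S.LHAt p x₀) (hqLH : S.LHAt q x₀)
    (hconst : S.L = ⊤ →
      ∃ a : ℝ, 0 < a ∧ ∃ pc qc : ℝ, ∀ x, a < S.d x₀ x → p x = pc ∧ q x = qc) :
    ∃ C : ℝ, 0 < C ∧ ∀ f g : X → ℝ,
      S.MemVL p f → S.MemVL (fun x => conj (q x)) g →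
      (∑' k : ℤ, S.VNorm p ((S.I2k x₀ A k).indicator f) *
          S.VNorm (fun x => conj (q x)) ((S.I2k x₀ A k).indicator g))
        ≤ C * S.VNorm p f * S.VNorm (fun x => conj (q x)) g :=
  statement7_general S A B hA hB hrd p q hp1 hpq hqbdd x₀ hpLH hqLH hconst
end
end
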